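/- arXiv:1910.03032 — 3 statements merged into one kernel-verified Lean document; each statement's English description precedes it below -/
import Mathlib

section
/- Let K = [A G; D 0] with A invertible and S = −D A⁻¹ G invertible, and let P_t = [A 0; D S] be the block lower-triangular preconditioner. Then the preconditioned operator K P_t⁻¹ satisfies (K P_t⁻¹ − I)² = 0; in particular, K P_t⁻¹ has 1 as its only eigenvalue. -/
open Matrix

/-- For the saddle-point matrix `K = [A G; D 0]` and the block lower-triangular
preconditioner `P_t = [A 0; D S]` with `S = −D A⁻¹ G`, the preconditioned
operator satisfies `(K P_t⁻¹ − I)² = 0`; in particular its only eigenvalue is 1. -/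
theorem block_triangular_preconditioner_nilpotent
    {n m : ℕ}
    (A : Matrix (Fin n) (Fin n) ℝ)
    (G : Matrix (Fin n) (Fin m) ℝ)
    (D : Matrix (Fin m) (Fin n) ℝ)
    (hA : IsUnit A.det)
    (hS : IsUnit (-(D * A⁻¹ * G)).det) :
    (Matrix.fromBlocks A G D (0 : Matrix (Fin m) (Fin m) ℝ) *
        (Matrix.fromBlocks A 0 D (-(D * A⁻¹ * G)))⁻¹ - 1) ^ 2 = 0 ∧
      ∀ μ : ℝ,
        μ ∈ spectrum ℝ
            (Matrix.fromBlocks A G D (0 : Matrix (Fin m) (Fin m) ℝ) *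
              (Matrix.fromBlocks A 0 D (-(D * A⁻¹ * G)))⁻¹) → μ = 1 := by
  set S : Matrix (Fin m) (Fin m) ℝ := -(D * A⁻¹ * G) with hSdef
  have hAA : A * A⁻¹ = 1 := mul_nonsing_inv A hA
  have hSS : S * S⁻¹ = 1 := mul_nonsing_inv S hS
  have hS'S : S⁻¹ * S = 1 := nonsing_inv_mul S hS
  have hDG : D * A⁻¹ * G = -S := by rw [hSdef, neg_neg]
  -- inverse of the preconditioner
  have hPinv : (Matrix.fromBlocks A 0 D S)⁻¹ =
      Matrix.fromBlocks A⁻¹ 0 (-(S⁻¹ * D * A⁻¹)) S⁻¹ := by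
    apply inv_eq_right_inv
    rw [Matrix.fromBlocks_multiply, ← Matrix.fromBlocks_one]
    rw [Matrix.fromBlocks_inj]
    refine ⟨by simp [hAA], by simp, ?_, by simp [hSS]⟩
    rw [Matrix.mul_neg, ← Matrix.mul_assoc, ← Matrix.mul_assoc, hSS, Matrix.one_mul]
    simp
  rw [hPinv]
  -- the preconditioned operator
  have hKP : Matrix.fromBlocks A G D (0 : Matrix (Fin m) (Fin m) ℝ) *
      Matrix.fromBlocks A⁻¹ 0 (-(S⁻¹ * D * A⁻¹)) S⁻¹ =
      Matrix.fromBlocks (1 + G * -(S⁻¹ * D * A⁻¹)) (G * S⁻¹) (D * A⁻¹) 0 := by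
    rw [Matrix.fromBlocks_multiply]
    simp [hAA, Matrix.mul_assoc]
  rw [hKP]
  have hnil : (Matrix.fromBlocks (1 + G * -(S⁻¹ * D * A⁻¹)) (G * S⁻¹) (D * A⁻¹)
      (0 : Matrix (Fin m) (Fin m) ℝ) - 1) ^ 2 = 0 := by
    have h1 : Matrix.fromBlocks (1 + G * -(S⁻¹ * D * A⁻¹)) (G * S⁻¹) (D * A⁻¹)
        (0 : Matrix (Fin m) (Fin m) ℝ) - 1 =
        Matrix.fromBlocks (G * -(S⁻¹ * D * A⁻¹)) (G * S⁻¹) (D * A⁻¹) (-1) := by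
      rw [← Matrix.fromBlocks_one, sub_eq_add_neg, Matrix.fromBlocks_neg,
        Matrix.fromBlocks_add]
      rw [Matrix.fromBlocks_inj]
      refine ⟨by abel, by simp, by simp, by simp⟩
    rw [sq, h1, Matrix.fromBlocks_multiply,
      show (0 : Matrix (Fin n ⊕ Fin m) (Fin n ⊕ Fin m) ℝ) = Matrix.fromBlocks 0 0 0 0 from
        Matrix.fromBlocks_zero.symm]
    rw [Matrix.fromBlocks_inj]
    refine ⟨?_, ?_, ?_, ?_⟩
    · have : G * -(S⁻¹ * D * A⁻¹) * (G * -(S⁻¹ * D * A⁻¹)) =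
          G * (S⁻¹ * ((D * A⁻¹ * G) * (S⁻¹ * (D * A⁻¹)))) := by
        simp only [Matrix.neg_mul, Matrix.mul_neg, neg_neg, Matrix.mul_assoc]
      rw [this, hDG]
      simp only [Matrix.neg_mul, Matrix.mul_neg, ← Matrix.mul_assoc, hS'S]
      simp [Matrix.mul_assoc]
    · have : G * -(S⁻¹ * D * A⁻¹) * (G * S⁻¹) =
          -(G * (S⁻¹ * ((D * A⁻¹ * G) * S⁻¹))) := by
        simp only [Matrix.neg_mul, Matrix.mul_neg, Matrix.mul_assoc]
      rw [this, hDG]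
      simp only [Matrix.neg_mul, Matrix.mul_neg, neg_neg, ← Matrix.mul_assoc, hS'S]
      simp [Matrix.mul_neg]
    · have : D * A⁻¹ * (G * -(S⁻¹ * D * A⁻¹)) =
          -((D * A⁻¹ * G) * (S⁻¹ * (D * A⁻¹))) := by
        simp only [Matrix.mul_neg, Matrix.mul_assoc]
      rw [this, hDG]
      simp only [neg_neg, Matrix.neg_mul, ← Matrix.mul_assoc, hSS]
      simp [Matrix.neg_mul]
    · have : D * A⁻¹ * (G * S⁻¹) = (D * A⁻¹ * G) * S⁻¹ := by
        simp only [Matrix.mul_assoc]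
      rw [this, hDG]
      simp [hSS]
  refine ⟨hnil, ?_⟩
  intro μ hμ
  by_contra hne
  rw [spectrum.mem_iff] at hμ
  apply hμ
  set M := Matrix.fromBlocks (1 + G * -(S⁻¹ * D * A⁻¹)) (G * S⁻¹) (D * A⁻¹)
      (0 : Matrix (Fin m) (Fin m) ℝ) with hM
  have hN : IsNilpotent (-(M - 1)) := ⟨2, by rw [neg_pow, hnil]; simp⟩
  have hu : IsUnit (algebraMap ℝ (Matrix (Fin n ⊕ Fin m) (Fin n ⊕ Fin m) ℝ) (μ - 1)) :=
    (algebraMap ℝ _).isUnit_map (isUnit_iff_ne_zero.mpr (sub_ne_zero.mpr hne))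
  have key : (algebraMap ℝ (Matrix (Fin n ⊕ Fin m) (Fin n ⊕ Fin m) ℝ)) μ - M =
      (algebraMap ℝ _ (μ - 1)) + -(M - 1) := by
    rw [map_sub, RingHom.map_one]
    abel
  rw [key]
  exact hN.isUnit_add_left_of_commute hu ((Algebra.commutes (μ - 1) (-(M - 1))).symm)
end

section
/- Suppose L = −ν D M⁻¹ G with M and L invertible, and suppose the commutativity relation L_v M_v⁻¹ G = G M⁻¹ L holds (where subscripts v denote the vector versions). Then the Schur complement satisfies S = −D L_v⁻¹ G = (1/ν) M. -/
open Matrix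

/-- Under the commutativity approximation `L_v M_v⁻¹ G = G M⁻¹ L` and the
relation `L = −ν D M_v⁻¹ G`, the steady Stokes Schur complement satisfies
`S = −D L_v⁻¹ G = (1/ν) M`. -/
theorem steady_stokes_schur_complement
    {n m : ℕ}
    (M L : Matrix (Fin m) (Fin m) ℝ)
    (Mv Lv : Matrix (Fin n) (Fin n) ℝ)
    (G : Matrix (Fin n) (Fin m) ℝ)
    (D : Matrix (Fin m) (Fin n) ℝ)
    (ν : ℝ) (hν : 0 < ν)
    (hM : IsUnit M.det) (hL : IsUnit L.det)
    (hMv : IsUnit Mv.det) (hLv : IsUnit Lv.det)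
    (hLdef : L = -(ν • (D * Mv⁻¹ * G)))
    (hcomm : Lv * Mv⁻¹ * G = G * M⁻¹ * L) :
    -(D * Lv⁻¹ * G) = ν⁻¹ • M := by
  have h1 : Mv⁻¹ * G = Lv⁻¹ * (G * M⁻¹ * L) := by
    calc Mv⁻¹ * G = Lv⁻¹ * (Lv * Mv⁻¹ * G) := by
          rw [Matrix.mul_assoc Lv, ← Matrix.mul_assoc Lv⁻¹,
            Matrix.nonsing_inv_mul _ hLv, Matrix.one_mul]
      _ = Lv⁻¹ * (G * M⁻¹ * L) := by rw [hcomm]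
  have h2 : L = -(ν • (D * (Lv⁻¹ * (G * M⁻¹ * L)))) :=
    hLdef.trans (by rw [Matrix.mul_assoc, h1])
  have h3 : -(ν • (D * (Lv⁻¹ * (G * M⁻¹)))) = (1 : Matrix (Fin m) (Fin m) ℝ) := by
    have := congrArg (· * L⁻¹) h2
    simpa [Matrix.mul_assoc, Matrix.mul_nonsing_inv _ hL] using this.symm
  have h4 : -(ν • (D * (Lv⁻¹ * G))) = M := by
    have := congrArg (· * M) h3
    simpa [Matrix.mul_assoc, Matrix.nonsing_inv_mul _ hM] using this
  have hν' : ν ≠ 0 := ne_of_gt hν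
  calc -(D * Lv⁻¹ * G) = ν⁻¹ • -(ν • (D * (Lv⁻¹ * G))) := by
        rw [smul_neg, smul_smul, inv_mul_cancel₀ hν', one_smul, Matrix.mul_assoc]
    _ = ν⁻¹ • M := by rw [h4]
end

section
/- Under the commutativity assumption (M_v/(αΔt) + L_v) M_v⁻¹ G = G M⁻¹ (M/(αΔt) + L) with all relevant matrices invertible and L = −ν D M_v⁻¹ G, the unsteady Stokes Schur complement S = −D (M_v/(αΔt) + L_v)⁻¹ G equals (1/ν) L (M/(αΔt) + L)⁻¹ M, and consequently S⁻¹ = (ν/(αΔt)) L⁻¹ + ν M⁻¹. -/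
open Matrix

/-- Under the commutativity approximation
`(M_v/(αΔt) + L_v) M_v⁻¹ G = G M⁻¹ (M/(αΔt) + L)` and `L = −ν D M_v⁻¹ G`,
the unsteady Stokes Schur complement `S = −D (M_v/(αΔt) + L_v)⁻¹ G` equals
`(1/ν) L (M/(αΔt) + L)⁻¹ M`, and `S⁻¹ = (ν/(αΔt)) L⁻¹ + ν M⁻¹`. -/
theorem unsteady_stokes_schur_complement
    {n m : ℕ}
    (M L : Matrix (Fin m) (Fin m) ℝ)
    (Mv Lv : Matrix (Fin n) (Fin n) ℝ)
    (G : Matrix (Fin n) (Fin m) ℝ)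
    (D : Matrix (Fin m) (Fin n) ℝ)
    (ν αΔt : ℝ) (hν : 0 < ν) (hα : 0 < αΔt)
    (hM : IsUnit M.det) (hL : IsUnit L.det)
    (hMv : IsUnit Mv.det)
    (hAp : IsUnit (αΔt⁻¹ • M + L).det)
    (hAv : IsUnit (αΔt⁻¹ • Mv + Lv).det)
    (hLdef : L = -(ν • (D * Mv⁻¹ * G)))
    (hcomm : (αΔt⁻¹ • Mv + Lv) * Mv⁻¹ * G = G * M⁻¹ * (αΔt⁻¹ • M + L)) :
    -(D * (αΔt⁻¹ • Mv + Lv)⁻¹ * G) = ν⁻¹ • (L * (αΔt⁻¹ • M + L)⁻¹ * M) ∧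
      (-(D * (αΔt⁻¹ • Mv + Lv)⁻¹ * G))⁻¹ = (ν / αΔt) • L⁻¹ + ν • M⁻¹ := by
  set Ap := αΔt⁻¹ • M + L with hApdef
  set Av := αΔt⁻¹ • Mv + Lv with hAvdef
  have hνne : ν ≠ 0 := ne_of_gt hν
  -- key: Av⁻¹ * G = Mv⁻¹ * G * Ap⁻¹ * M
  have h1 : Mv⁻¹ * G = Av⁻¹ * (G * M⁻¹ * Ap) := by
    have := congrArg (fun X => Av⁻¹ * X) hcomm
    simpa [Matrix.mul_assoc, Matrix.nonsing_inv_mul_cancel_left _ _ hAv] using this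
  have hkey : Av⁻¹ * G = Mv⁻¹ * G * Ap⁻¹ * M := by
    rw [h1]
    rw [Matrix.mul_assoc (Av⁻¹ * (G * M⁻¹ * Ap)) Ap⁻¹ M]
    rw [Matrix.mul_assoc Av⁻¹ (G * M⁻¹ * Ap) (Ap⁻¹ * M)]
    congr 1
    rw [Matrix.mul_assoc (G * M⁻¹) Ap (Ap⁻¹ * M),
      ← Matrix.mul_assoc Ap Ap⁻¹ M, Matrix.mul_nonsing_inv _ hAp, Matrix.one_mul,
      Matrix.mul_assoc, Matrix.nonsing_inv_mul _ hM, Matrix.mul_one]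
  have hDMG : D * Mv⁻¹ * G = -(ν⁻¹ • L) := by
    rw [hLdef]; simp [smul_smul, inv_mul_cancel₀ hνne]
  have hfirst : -(D * Av⁻¹ * G) = ν⁻¹ • (L * Ap⁻¹ * M) := by
    calc -(D * Av⁻¹ * G) = -(D * Mv⁻¹ * G * (Ap⁻¹ * M)) := by
          rw [Matrix.mul_assoc D Av⁻¹ G, hkey]; simp [Matrix.mul_assoc]
      _ = ν⁻¹ • (L * Ap⁻¹ * M) := by
          rw [hDMG]; simp [Matrix.smul_mul, Matrix.mul_assoc]
  refine ⟨hfirst, ?_⟩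
  rw [hfirst]
  have hApinv : IsUnit Ap⁻¹.det := by
    rw [Matrix.det_nonsing_inv]; exact hAp.ringInverse
  have hdet : IsUnit (L * Ap⁻¹ * M).det := by
    rw [Matrix.det_mul, Matrix.det_mul]
    exact (hL.mul hApinv).mul hM
  have : Invertible ν := invertibleOfNonzero hνne
  have hsmul : (ν⁻¹ • (L * Ap⁻¹ * M))⁻¹ = ν • (L * Ap⁻¹ * M)⁻¹ :=
    Matrix.inv_eq_right_inv (by
      rw [Matrix.smul_mul, Matrix.mul_smul, smul_smul, inv_mul_cancel₀ hνne, one_smul,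
        Matrix.mul_nonsing_inv _ hdet])
  rw [hsmul, Matrix.mul_inv_rev, Matrix.mul_inv_rev,
    Matrix.nonsing_inv_nonsing_inv _ hAp, hApdef,
    Matrix.add_mul, Matrix.smul_mul, Matrix.mul_nonsing_inv _ hL, Matrix.mul_add,
    Matrix.mul_smul, Matrix.nonsing_inv_mul_cancel_left _ _ hM, Matrix.mul_one, smul_add,
    smul_smul, div_eq_mul_inv]
end
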